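/- One-dimensional resolvent approximation: let l ∈ ℝ, ω ≥ 0, λ ∈ ℝ with λ > ω and l ≤ ω. Suppose s : [0,∞) → ℝ is continuous with 0 ≤ s(t) ≤ e^{ωt} for all t ≥ 0 and s(t) = 1 + t·l + o(t) as t → 0⁺. Then lim_{n→∞} ∫₀^∞ e^{-λt} s(t/n)^n dt = ∫₀^∞ e^{-λt} e^{tl} dt = 1/(λ − l). -/

import Mathlib

/-!
Since `n (s(t/n) - 1) → t l`, the Chernoff products `s(t/n)^n` converge pointwise to `e^{tl}`.
For `n ≥ 1` the bound `s ≤ e^{ω ·}` gives `s(t/n)^n ≤ e^{ωt}`, so the integrands are dominated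
by `e^{(ω-λ)t}`, which is integrable because `λ > ω`; dominated convergence then identifies the
limit with the Laplace transform of `e^{tl}` at `λ`, which is `1/(λ - l)`.
-/

open MeasureTheory Filter Topology Set

lemma pow_le_exp_of_le_exp_div {x a : ℝ} {n : ℕ} (hn : n ≠ 0) (hx : 0 ≤ x)
    (h : x ≤ Real.exp (a / n)) : x ^ n ≤ Real.exp a :=
  calc x ^ n ≤ Real.exp (a / n) ^ n := pow_le_pow_left₀ hx h n
    _ = Real.exp a := by rw [← Real.exp_nat_mul, mul_div_cancel₀ _ (by exact_mod_cast hn)]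

lemma tendsto_const_div_natCast_nhdsGT_zero {t : ℝ} (ht : 0 < t) :
    Tendsto (fun n : ℕ => t / n) atTop (𝓝[>] 0) :=
  tendsto_nhdsWithin_iff.mpr
    ⟨tendsto_const_div_atTop_nhds_zero_nat t,
      (eventually_gt_atTop 0).mono fun _ hn => div_pos ht (by exact_mod_cast hn)⟩

lemma tendsto_pow_comp_div_natCast {s : ℝ → ℝ} {l t : ℝ}
    (hs : Tendsto (fun u => (s u - 1) / u) (𝓝[>] 0) (𝓝 l)) (ht : 0 < t) :
    Tendsto (fun n : ℕ => s (t / n) ^ n) atTop (𝓝 (Real.exp (t * l))) := by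
  have hmul : Tendsto (fun n : ℕ => n * (s (t / n) - 1)) atTop (𝓝 (t * l)) := by
    refine ((hs.comp (tendsto_const_div_natCast_nhdsGT_zero ht)).const_mul t).congr' ?_
    filter_upwards [eventually_ne_atTop 0] with n hn
    have : (n : ℝ) ≠ 0 := by exact_mod_cast hn
    simp only [Function.comp_apply]
    field_simp
  simpa using Real.tendsto_one_add_pow_exp_of_tendsto hmul

lemma integral_Ioi_exp_neg_mul_mul_exp_mul {l lam : ℝ} (h : l < lam) :
    ∫ t in Ioi (0 : ℝ), Real.exp (-lam * t) * Real.exp (t * l) = 1 / (lam - l) := by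
  have hexp : ∀ t, Real.exp (-lam * t) * Real.exp (t * l) = Real.exp ((l - lam) * t) := by
    intro t
    rw [← Real.exp_add]
    ring_nf
  simp_rw [hexp]
  rw [integral_exp_mul_Ioi (by linarith) 0, mul_zero, Real.exp_zero, neg_div, ← div_neg, neg_sub]

theorem tendsto_integral_exp_neg_mul_mul_pow_comp_div {s : ℝ → ℝ} {l ω lam : ℝ}
    (hlam : ω < lam) (hscont : ContinuousOn s (Ici 0))
    (hsbound : ∀ t, 0 ≤ t → 0 ≤ s t ∧ s t ≤ Real.exp (ω * t))
    (hs : Tendsto (fun u => (s u - 1) / u) (𝓝[>] 0) (𝓝 l)) :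
    Tendsto (fun n : ℕ => ∫ t in Ioi (0 : ℝ), Real.exp (-lam * t) * s (t / n) ^ n)
      atTop (𝓝 (∫ t in Ioi (0 : ℝ), Real.exp (-lam * t) * Real.exp (t * l))) := by
  refine tendsto_integral_filter_of_dominated_convergence (fun t => Real.exp ((ω - lam) * t))
    (Eventually.of_forall fun n => ?_) ((eventually_ne_atTop 0).mono fun n hn => ?_)
    (integrableOn_exp_mul_Ioi (by linarith) 0) ?_
  · refine ContinuousOn.aestronglyMeasurable ?_ measurableSet_Ioi
    refine (by fun_prop : Continuous fun t => Real.exp (-lam * t)).continuousOn.mul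
      ((hscont.comp (by fun_prop) fun t (ht : 0 < t) => ?_).pow n)
    exact div_nonneg ht.le n.cast_nonneg
  · refine (ae_restrict_iff' measurableSet_Ioi).mpr (ae_of_all _ fun t (ht : 0 < t) => ?_)
    obtain ⟨hs0, hs1⟩ := hsbound (t / n) (div_nonneg ht.le n.cast_nonneg)
    have hpow : s (t / n) ^ n ≤ Real.exp (ω * t) :=
      pow_le_exp_of_le_exp_div hn hs0 (by rwa [mul_div_assoc])
    calc ‖Real.exp (-lam * t) * s (t / n) ^ n‖ = Real.exp (-lam * t) * s (t / n) ^ n := by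
          rw [Real.norm_of_nonneg (by positivity)]
      _ ≤ Real.exp (-lam * t) * Real.exp (ω * t) := by gcongr
      _ = Real.exp ((ω - lam) * t) := by rw [← Real.exp_add]; ring_nf
  · refine (ae_restrict_iff' measurableSet_Ioi).mpr (ae_of_all _ fun t (ht : 0 < t) => ?_)
    exact (tendsto_pow_comp_div_natCast hs ht).const_mul _

theorem stmt_6_general
    (l ω lam : ℝ) (hlam : ω < lam) (hl : l ≤ ω)
    (s : ℝ → ℝ) (hscont : ContinuousOn s (Ici (0 : ℝ)))
    (hsbound : ∀ t : ℝ, 0 ≤ t → 0 ≤ s t ∧ s t ≤ Real.exp (ω * t))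
    (hderiv : Tendsto (fun t : ℝ => (s t - 1 - t * l) / t) (𝓝[>] (0 : ℝ)) (𝓝 0)) :
    Tendsto
      (fun n : ℕ => ∫ t in Ioi (0 : ℝ), Real.exp (-lam * t) * (s (t / n)) ^ n)
      atTop (𝓝 (∫ t in Ioi (0 : ℝ), Real.exp (-lam * t) * Real.exp (t * l))) ∧
    (∫ t in Ioi (0 : ℝ), Real.exp (-lam * t) * Real.exp (t * l)) = 1 / (lam - l) := by
  have hs : Tendsto (fun u => (s u - 1) / u) (𝓝[>] 0) (𝓝 l) := by
    refine (zero_add l ▸ hderiv.add_const l).congr' ?_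
    filter_upwards [self_mem_nhdsWithin] with u (hu : 0 < u)
    field_simp
    ring
  exact ⟨tendsto_integral_exp_neg_mul_mul_pow_comp_div hlam hscont hsbound hs,
    integral_Ioi_exp_neg_mul_mul_exp_mul (hl.trans_lt hlam)⟩

/-- one-dimensional resolvent approximation. -/
theorem stmt_6
    (l ω lam : ℝ) (hω : 0 ≤ ω) (hlam : ω < lam) (hl : l ≤ ω)
    (s : ℝ → ℝ) (hscont : ContinuousOn s (Ici (0 : ℝ)))
    (hsbound : ∀ t : ℝ, 0 ≤ t → 0 ≤ s t ∧ s t ≤ Real.exp (ω * t))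
    (hderiv : Tendsto (fun t : ℝ => (s t - 1 - t * l) / t) (𝓝[>] (0 : ℝ)) (𝓝 0)) :
    Tendsto
      (fun n : ℕ => ∫ t in Ioi (0 : ℝ), Real.exp (-lam * t) * (s (t / n)) ^ n)
      atTop (𝓝 (∫ t in Ioi (0 : ℝ), Real.exp (-lam * t) * Real.exp (t * l))) ∧
    (∫ t in Ioi (0 : ℝ), Real.exp (-lam * t) * Real.exp (t * l)) = 1 / (lam - l) :=
  stmt_6_general l ω lam hlam hl s hscont hsbound hderiv
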